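/- Let G be a finite commutative group, H a subgroup, and G₁ = G/H. Let A ⊆ G be a standard set, A_H = A ∩ H (a standard set in H), and A₁ = A/H = {a + H : a ∈ A} (a standard set in G₁). Then λ(A) ≥ λ(A_H) · λ(A₁), λ⁺(A) ≥ λ⁺(A_H) · λ⁺(A₁), λ⁻(A) ≥ λ⁻(A_H) · λ⁻(A₁), and λ±(A) ≥ λ±(A_H) · λ⁻(A₁), where the quantities for A_H and A₁ are computed in the groups H and G₁ respectively. -/

import Mathlib

open scoped Pointwise ComplexOrder

noncomputable section

def IsStandard {G : Type*} [AddCommGroup G] (A : Set G) : Prop :=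
  A = -A ∧ (0 : G) ∈ A

def Delta {G : Type*} [AddCommGroup G] (A : Set G) : ℕ :=
  sSup {n | ∃ B : Finset G, ((B : Set G) - (B : Set G)) ∩ A = {0} ∧ B.card = n}

def DeltaBar {G : Type*} [AddCommGroup G] (A : Set G) : ℕ :=
  sSup {n | ∃ B : Finset G, ((B : Set G) - (B : Set G)) ⊆ A ∧ B.card = n}

def deltaL {G : Type*} [AddCommGroup G] [Fintype G] (A : Set G) : ℝ :=
  (Delta A : ℝ) / (Fintype.card G : ℝ)

def deltaU {G : Type*} [AddCommGroup G] (A : Set G) : ℝ :=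
  1 / (DeltaBar A : ℝ)

def ftrans {G : Type*} [AddCommGroup G] [Fintype G] (f : G → ℝ) (γ : AddChar G Circle) : ℂ :=
  ∑ x, (γ x : ℂ) * (f x : ℂ)

def PosFT {G : Type*} [AddCommGroup G] [Fintype G] (f : G → ℝ) : Prop :=
  ∀ γ : AddChar G Circle, 0 ≤ ftrans f γ

def lamSet {G : Type*} [AddCommGroup G] [Fintype G] (S : Set (G → ℝ)) : Set ℝ :=
  {r | ∃ f ∈ S, PosFT f ∧ (∑ x, f x) ≠ 0 ∧ r = f 0 / ∑ x, f x}

def lam {G : Type*} [AddCommGroup G] [Fintype G] (A : Set G) : ℝ :=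
  sInf (lamSet {f | f ≠ 0 ∧ ∀ x ∉ A, f x = 0})

def lamMinus {G : Type*} [AddCommGroup G] [Fintype G] (A : Set G) : ℝ :=
  sInf (lamSet {f | f ≠ 0 ∧ ∀ x ∉ A, f x ≤ 0})

def lamPlus {G : Type*} [AddCommGroup G] [Fintype G] (A : Set G) : ℝ :=
  sInf (lamSet {f | f ≠ 0 ∧ (∀ x ∉ A, f x = 0) ∧ ∀ x ∈ A, 0 ≤ f x})

def lamPM {G : Type*} [AddCommGroup G] [Fintype G] (A : Set G) : ℝ :=
  sInf (lamSet {f | f ≠ 0 ∧ (∀ x ∉ A, f x ≤ 0) ∧ ∀ x ∈ A, 0 ≤ f x})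

/-!
If `f̂ ≥ 0` then `f` is a positive-definite function, hence its restriction `f ∘ H.subtype` to `H`
has nonnegative Fourier transform; so does its pushforward `F c = ∑_{x ∈ c} f x` to `G ⧸ H`,
since `F̂ η = f̂ (η ∘ π)`. As `F 0 = ∑_{h ∈ H} f h` and `∑ F = ∑ f`, the ratio of `f` factors as
`f 0 / ∑ f = (f 0 / ∑_H f) * (F 0 / ∑ F)`, the two factors being the ratios of the restriction and
of the pushforward. Restriction and pushforward preserve the sign conditions defining each class,
except that positivity on `A` is lost on the quotient, which is why `λ±(A)` pairs with `λ⁻(A₁)`.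
-/

open scoped ComplexConjugate

noncomputable instance AddChar.instFintypeCircle {G : Type*} [AddCommGroup G] [Fintype G] :
    Fintype (AddChar G Circle) :=
  Fintype.ofEquiv _ AddChar.circleEquivComplex.symm.toEquiv

lemma AddChar.circle_apply_sub {G : Type*} [AddCommGroup G] (γ : AddChar G Circle) (x y : G) :
    (γ (x - y) : ℂ) = γ x * conj (γ y : ℂ) := by
  rw [AddChar.map_sub_eq_div, Circle.coe_div, div_eq_mul_inv, ← Circle.coe_inv,
    Circle.coe_inv_eq_conj]

section Fourier

variable {G : Type*} [AddCommGroup G] [Fintype G]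

lemma AddChar.sum_circle_apply_eq_ite [DecidableEq G] (a : G) :
    ∑ γ : AddChar G Circle, (γ a : ℂ) = if a = 0 then (Fintype.card G : ℂ) else 0 := by
  rw [← AddChar.sum_apply_eq_ite]
  exact Fintype.sum_equiv AddChar.circleEquivComplex.toEquiv _ _ fun _ => rfl

lemma sum_ftrans_mul_conj (f : G → ℝ) (z : G) :
    ∑ γ, ftrans f γ * conj (γ z : ℂ) = Fintype.card G * f z := by
  classical
  simp_rw [ftrans, Finset.sum_mul]
  rw [Finset.sum_comm]
  simp_rw [mul_right_comm _ (f _ : ℂ), ← AddChar.circle_apply_sub, mul_comm _ (f _ : ℂ),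
    ← Finset.mul_sum, AddChar.sum_circle_apply_eq_ite, sub_eq_zero]
  simp

lemma sum_ftrans (f : G → ℝ) : ∑ γ, ftrans f γ = Fintype.card G * f 0 := by
  simpa using sum_ftrans_mul_conj f 0

lemma ftrans_one (f : G → ℝ) : ftrans f 1 = ((∑ x, f x : ℝ) : ℂ) := by
  simp [ftrans]

lemma card_mul_sum_sum_eq_sum_ftrans_mul (f : G → ℝ) {ι : Type*} [Fintype ι]
    (p : ι → G) (u : ι → ℂ) :
    (Fintype.card G : ℂ) * ∑ i, ∑ j, (f (p i - p j) : ℂ) * (u i * conj (u j)) =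
      ∑ γ, ftrans f γ *
        ((∑ i, conj (γ (p i) : ℂ) * u i) * ∑ j, (γ (p j) : ℂ) * conj (u j)) := by
  simp_rw [Finset.sum_mul_sum, Finset.mul_sum]
  symm
  rw [Finset.sum_comm]
  refine Finset.sum_congr rfl fun i _ => ?_
  rw [Finset.sum_comm]
  refine Finset.sum_congr rfl fun j _ => ?_
  rw [← mul_assoc, ← sum_ftrans_mul_conj, Finset.sum_mul]
  refine Finset.sum_congr rfl fun γ _ => ?_
  rw [AddChar.circle_apply_sub, map_mul, Complex.conj_conj]
  ring

namespace PosFT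

variable {f : G → ℝ}

lemma sum_nonneg (hf : PosFT f) : 0 ≤ ∑ x, f x := by
  have h := hf 1
  rw [ftrans_one] at h
  exact_mod_cast h

lemma sum_le_card_mul_apply_zero (hf : PosFT f) : ∑ x, f x ≤ Fintype.card G * f 0 := by
  have h : ftrans f 1 ≤ ∑ γ, ftrans f γ :=
    Finset.single_le_sum (fun γ _ => hf γ) (Finset.mem_univ 1)
  rw [ftrans_one, sum_ftrans] at h
  exact_mod_cast h

lemma apply_zero_pos (hf : PosFT f) (hs : ∑ x, f x ≠ 0) : 0 < f 0 := by
  have hpos : 0 < (Fintype.card G : ℝ) * f 0 :=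
    (hf.sum_nonneg.lt_of_ne' hs).trans_le hf.sum_le_card_mul_apply_zero
  exact pos_of_mul_pos_right hpos (Nat.cast_nonneg _)

lemma sum_sum_mul_conj_nonneg (hf : PosFT f) {ι : Type*} [Fintype ι] (p : ι → G) (u : ι → ℂ) :
    0 ≤ ∑ i, ∑ j, (f (p i - p j) : ℂ) * (u i * conj (u j)) := by
  have hsq : ∀ γ : AddChar G Circle, 0 ≤ (∑ i, conj (γ (p i) : ℂ) * u i) *
      ∑ j, (γ (p j) : ℂ) * conj (u j) := fun γ => by
    have hconj : ∑ j, (γ (p j) : ℂ) * conj (u j) = conj (∑ i, conj (γ (p i) : ℂ) * u i) := by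
      rw [map_sum]
      exact Finset.sum_congr rfl fun j _ => by rw [map_mul, Complex.conj_conj]
    rw [hconj, Complex.mul_conj]
    exact Complex.zero_le_real.2 (Complex.normSq_nonneg _)
  have h := card_mul_sum_sum_eq_sum_ftrans_mul f p u ▸
    Finset.sum_nonneg fun γ _ => mul_nonneg (hf γ) (hsq γ)
  exact le_of_mul_le_mul_left (by rwa [mul_zero]) (Nat.cast_pos'.mpr Fintype.card_pos)

/-- The positive-definite form at the points `φ k` with weights `χ k` is `|K| • (f ∘ φ)^(χ)`. -/
lemma comp (hf : PosFT f) {K : Type*} [AddCommGroup K] [Fintype K] (φ : K →+ G) :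
    PosFT (f ∘ φ) := by
  intro χ
  have h := hf.sum_sum_mul_conj_nonneg φ (fun k => (χ k : ℂ))
  have key : ∑ k, ∑ l, (f (φ k - φ l) : ℂ) * ((χ k : ℂ) * conj (χ l : ℂ)) =
      Fintype.card K * ftrans (f ∘ φ) χ := by
    simp_rw [← AddChar.circle_apply_sub, ← map_sub]
    rw [Finset.sum_comm]
    have hshift : ∀ l : K, ∑ k, (f (φ (k - l)) : ℂ) * (χ (k - l) : ℂ) = ftrans (f ∘ φ) χ :=
      fun l => by
        rw [ftrans]
        exact Fintype.sum_equiv (Equiv.subRight l) _ _ fun k => mul_comm _ _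
    simp_rw [hshift, Finset.sum_const, Finset.card_univ, nsmul_eq_mul]
  rw [key] at h
  exact le_of_mul_le_mul_left (by rwa [mul_zero]) (Nat.cast_pos'.mpr Fintype.card_pos)

end PosFT

end Fourier

section pushforward

open Classical

def pushforward {α β : Type*} [Fintype α] (φ : α → β) (f : α → ℝ) (y : β) : ℝ :=
  ∑ x with φ x = y, f x

variable {α β : Type*} [Fintype α] (φ : α → β) {f : α → ℝ}

lemma sum_pushforward [Fintype β] (f : α → ℝ) : ∑ y, pushforward φ f y = ∑ x, f x :=
  Finset.sum_fiberwise Finset.univ φ f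

lemma pushforward_eq_zero_of_notMem_image {A : Set α} (hf : ∀ x ∉ A, f x = 0) :
    ∀ y ∉ φ '' A, pushforward φ f y = 0 := fun _ hy =>
  Finset.sum_eq_zero fun x hx => hf x fun hxA => hy ⟨x, hxA, (Finset.mem_filter.1 hx).2⟩

lemma pushforward_nonpos_of_notMem_image {A : Set α} (hf : ∀ x ∉ A, f x ≤ 0) :
    ∀ y ∉ φ '' A, pushforward φ f y ≤ 0 := fun _ hy =>
  Finset.sum_nonpos fun x hx => hf x fun hxA => hy ⟨x, hxA, (Finset.mem_filter.1 hx).2⟩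

lemma pushforward_nonneg (hf : ∀ x, 0 ≤ f x) (y : β) : 0 ≤ pushforward φ f y :=
  Finset.sum_nonneg fun x _ => hf x

end pushforward

lemma PosFT.pushforward {G K : Type*} [AddCommGroup G] [Fintype G] [AddCommGroup K] [Fintype K]
    {f : G → ℝ} (hf : PosFT f) (φ : G →+ K) : PosFT (_root_.pushforward φ f) := by
  classical
  intro η
  have key : ftrans (_root_.pushforward φ f) η = ftrans f (η.compAddMonoidHom φ) := by
    simp only [ftrans, _root_.pushforward]
    push_cast
    simp_rw [Finset.mul_sum]
    rw [← Finset.sum_fiberwise Finset.univ φ]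
    refine Finset.sum_congr rfl fun k _ => Finset.sum_congr rfl fun x hx => ?_
    obtain rfl := (Finset.mem_filter.1 hx).2
    rfl
  exact key ▸ hf _

lemma pushforward_mk'_zero {G : Type*} [AddCommGroup G] [Fintype G] (H : AddSubgroup G)
    [Fintype H] (f : G → ℝ) : pushforward (QuotientAddGroup.mk' H) f 0 = ∑ h : H, f h := by
  classical
  exact Finset.sum_subtype _ (fun x => by simp [QuotientAddGroup.eq_zero_iff]) f

section lamSet

variable {G : Type*} [AddCommGroup G] [Fintype G]

lemma pos_of_mem_lamSet {S : Set (G → ℝ)} {r : ℝ} (hr : r ∈ lamSet S) : 0 < r := by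
  obtain ⟨f, -, hf, hs, rfl⟩ := hr
  exact div_pos (hf.apply_zero_pos hs) (hf.sum_nonneg.lt_of_ne' hs)

lemma lamSet_bddBelow (S : Set (G → ℝ)) : BddBelow (lamSet S) :=
  ⟨0, fun _ hr => (pos_of_mem_lamSet hr).le⟩

lemma posFT_single_zero [DecidableEq G] : PosFT (Pi.single (0 : G) (1 : ℝ)) := by
  intro γ
  rw [ftrans, Finset.sum_eq_single 0
    (fun x _ hx => by rw [Pi.single_eq_of_ne hx, Complex.ofReal_zero, mul_zero])
    (absurd (Finset.mem_univ 0)), AddChar.map_zero_eq_one, Pi.single_eq_same]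
  simp

lemma lamSet_nonempty_of_single_zero_mem [DecidableEq G] {S : Set (G → ℝ)}
    (h : Pi.single 0 1 ∈ S) :
    (lamSet S).Nonempty :=
  ⟨_, _, h, posFT_single_zero, by simp, rfl⟩

theorem sInf_lamSet_mul_le [DecidableEq G] (H : AddSubgroup G) [Fintype H] [Fintype (G ⧸ H)]
    {P : (G → ℝ) → Prop} {PH : (H → ℝ) → Prop} {PQ : (G ⧸ H → ℝ) → Prop}
    (hδ : P (Pi.single 0 1)) (hPH : ∀ f, P f → PH (f ∘ H.subtype))
    (hPQ : ∀ f, P f → PQ (pushforward (QuotientAddGroup.mk' H) f)) :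
    sInf (lamSet {g | g ≠ 0 ∧ PH g}) * sInf (lamSet {g | g ≠ 0 ∧ PQ g}) ≤
      sInf (lamSet {f | f ≠ 0 ∧ P f}) := by
  refine le_csInf (lamSet_nonempty_of_single_zero_mem ⟨by simp, hδ⟩) ?_
  rintro _ ⟨f, ⟨-, hf⟩, hpos, hsum, rfl⟩
  set F := pushforward (QuotientAddGroup.mk' H) f
  have hFsum : ∑ c, F c = ∑ x, f x := sum_pushforward _ f
  have hF0 : 0 < F 0 := (hpos.pushforward _).apply_zero_pos (hFsum ▸ hsum)
  have hgsum : ∑ h : H, (f ∘ H.subtype) h = F 0 := (pushforward_mk'_zero H f).symm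
  have hH : sInf (lamSet {g | g ≠ 0 ∧ PH g}) ≤ f 0 / F 0 := by
    refine csInf_le (lamSet_bddBelow _)
      ⟨f ∘ H.subtype, ⟨fun h0 => hF0.ne' ?_, hPH f hf⟩, hpos.comp _, hgsum ▸ hF0.ne', ?_⟩
    · rw [← hgsum, h0]
      simp
    · rw [hgsum]
      rfl
  have hQ : sInf (lamSet {g | g ≠ 0 ∧ PQ g}) ≤ F 0 / ∑ x, f x := by
    refine csInf_le (lamSet_bddBelow _)
      ⟨F, ⟨fun h0 => hsum ?_, hPQ f hf⟩, hpos.pushforward _, hFsum ▸ hsum, by rw [hFsum]⟩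
    simp [← hFsum, h0]
  calc sInf (lamSet {g | g ≠ 0 ∧ PH g}) * sInf (lamSet {g | g ≠ 0 ∧ PQ g})
      ≤ f 0 / F 0 * (F 0 / ∑ x, f x) :=
        mul_le_mul hH hQ (Real.sInf_nonneg fun _ hr => (pos_of_mem_lamSet hr).le)
          (div_pos (hpos.apply_zero_pos hsum) hF0).le
    _ = f 0 / ∑ x, f x := div_mul_div_cancel₀ hF0.ne'

end lamSet

theorem stmt15 {G : Type*} [AddCommGroup G] [Fintype G]
    (H : AddSubgroup G) [Fintype H] [Fintype (G ⧸ H)]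
    (A : Set G) (hA : IsStandard A)
    (AH : Set H) (hAH : AH = Subtype.val ⁻¹' A)
    (A₁ : Set (G ⧸ H)) (hA₁ : A₁ = (QuotientAddGroup.mk : G → G ⧸ H) '' A) :
    lam AH * lam A₁ ≤ lam A ∧
    lamPlus AH * lamPlus A₁ ≤ lamPlus A ∧
    lamMinus AH * lamMinus A₁ ≤ lamMinus A ∧
    lamPM AH * lamMinus A₁ ≤ lamPM A := by
  classical
  subst hAH hA₁
  have hδ : ∀ x ∉ A, (Pi.single 0 1 : G → ℝ) x = 0 := fun x hx =>
    Pi.single_eq_of_ne (ne_of_mem_of_not_mem hA.2 hx).symm 1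
  have hδnonneg : ∀ x ∈ A, 0 ≤ (Pi.single 0 1 : G → ℝ) x := fun x _ =>
    (Pi.single_nonneg.2 zero_le_one : (0 : G → ℝ) ≤ Pi.single 0 1) x
  have nonneg_of_supp : ∀ f : G → ℝ, (∀ x ∉ A, f x = 0) → (∀ x ∈ A, 0 ≤ f x) → ∀ x, 0 ≤ f x :=
    fun f hf0 hfA x => by
      by_cases hx : x ∈ A
      exacts [hfA x hx, (hf0 x hx).ge]
  refine ⟨?_, ?_, ?_, ?_⟩
  · exact sInf_lamSet_mul_le H hδ (fun f hf h hh => hf h hh)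
      (fun f hf => pushforward_eq_zero_of_notMem_image _ hf)
  · exact sInf_lamSet_mul_le H (P := fun f => (∀ x ∉ A, f x = 0) ∧ ∀ x ∈ A, 0 ≤ f x)
      ⟨hδ, hδnonneg⟩ (fun f hf => ⟨fun h hh => hf.1 h hh, fun h hh => hf.2 h hh⟩)
      (fun f hf => ⟨pushforward_eq_zero_of_notMem_image _ hf.1,
        fun c _ => pushforward_nonneg _ (nonneg_of_supp f hf.1 hf.2) c⟩)
  · exact sInf_lamSet_mul_le H (fun x hx => (hδ x hx).le) (fun f hf h hh => hf h hh)
      (fun f hf => pushforward_nonpos_of_notMem_image _ hf)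
  · exact sInf_lamSet_mul_le H (P := fun f => (∀ x ∉ A, f x ≤ 0) ∧ ∀ x ∈ A, 0 ≤ f x)
      ⟨fun x hx => (hδ x hx).le, hδnonneg⟩
      (fun f hf => ⟨fun h hh => hf.1 h hh, fun h hh => hf.2 h hh⟩)
      (fun f hf => pushforward_nonpos_of_notMem_image _ hf.1)
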